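/- arXiv:0903.2215 — 4 statements merged into one kernel-verified Lean document; each statement's English description precedes it below -/
import Mathlib

section
/- Let ((x_n, r_n))_{n≥1} be a system in [0,1]^d satisfying the weak redundancy condition C_1 with sequence (N_j). Then for every δ ≥ 1, the Hausdorff dimension of L_δ = {x : |x - x_n| ≤ r_n^δ for infinitely many n} is at most d/δ. -/
open Metric Set Filter

noncomputable section

/-- `n` is an irreducible index for the sequence of centers `x`: the point `x n`
has not appeared before. The irreducible subsystem of a system retains exactly the
couples `(x n, r n)` for irreducible `n`. -/
def Irred {α : Type*} (x : ℕ → α) (n : ℕ) : Prop := ∀ m < n, x m ≠ x n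

/-- The set `T_j` of irreducible indices whose radius lies in `(2^{-(j+1)}, 2^{-j}]`. -/
def Tset {d : ℕ} (x : ℕ → Fin d → ℝ) (r : ℕ → ℝ) (j : ℕ) : Set ℕ :=
  {n | Irred x n ∧ ((2:ℝ) ^ (j + 1))⁻¹ < r n ∧ r n ≤ ((2:ℝ) ^ j)⁻¹}

/-- Condition `C₁` (weak redundancy): there is a non-decreasing integer sequence `N j ≥ 1`
with `log₂ (N j) / j → 0` such that each `T_j` can be partitioned into at most `N j`
classes (given by a colouring `c`), within each of which the balls `B(x n, r n)` are
pairwise disjoint. -/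
def WeakRedundancy {d : ℕ} (x : ℕ → Fin d → ℝ) (r : ℕ → ℝ) (N : ℕ → ℕ) : Prop :=
  Monotone N ∧ (∀ j, 1 ≤ N j) ∧
  Tendsto (fun j : ℕ => Real.logb 2 (N j) / j) atTop (nhds 0) ∧
  ∀ j, ∃ c : ℕ → ℕ, (∀ n ∈ Tset x r j, c n < N j) ∧
    ∀ m ∈ Tset x r j, ∀ n ∈ Tset x r j, m ≠ n → c m = c n →
      Disjoint (closedBall (x m) (r m)) (closedBall (x n) (r n))

open ENNReal MeasureTheory Topology

/-! A point of `L_δ` that is not itself a centre is approximated infinitely often by irreducible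
indices, because `r` is antitone; the countable set of centres does not affect the dimension.
By volume, a class of `T_j` with pairwise disjoint balls has at most `2^{(j+1)d}` elements, so
`#T_j ≤ N_j 2^{(j+1)d}`, while each ball `B(x_n, r_n^δ)` with `n ∈ T_j` has diameter at most
`2^{1-jδ}`. For `s > d/δ` the sum of the `s`-th powers of all these diameters is therefore
dominated by `∑ N_j 2^{-(δs-d)j}`, which converges since `N_j = 2^{o(j)}`, and the
Hausdorff–Cantelli lemma gives `μH[s] = 0`. -/

theorem hausdorffMeasure_setOf_frequently_mem_eq_zero {X : Type*} [EMetricSpace X]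
    [MeasurableSpace X] [BorelSpace X] {s : ℝ} (hs : 0 < s) (U : ℕ → Set X)
    (hU : ∑' n, ediam (U n) ^ s ≠ ∞) :
    μH[s] {y | ∃ᶠ n in atTop, y ∈ U n} = 0 := by
  set tail : ℕ → ℝ≥0∞ := fun J => ∑' k, ediam (U (k + J)) ^ s
  have htail : Tendsto tail atTop (𝓝 0) := ENNReal.tendsto_sum_nat_add _ hU
  have hradius : Tendsto (fun J => tail J ^ s⁻¹) atTop (𝓝 0) :=
    (ENNReal.continuous_rpow_const.tendsto' 0 0 (ENNReal.zero_rpow_of_pos (inv_pos.mpr hs))).comp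
      htail
  have hdiam : ∀ J k, ediam (U (k + J)) ≤ tail J ^ s⁻¹ := fun J k =>
    (ENNReal.le_rpow_inv_iff hs).mpr (ENNReal.le_tsum k)
  have hcover : ∀ J, {y | ∃ᶠ n in atTop, y ∈ U n} ⊆ ⋃ k, U (k + J) := fun J y hy => by
    obtain ⟨n, hJn, hyn⟩ := (frequently_atTop.mp hy) J
    exact mem_iUnion.mpr ⟨n - J, by rwa [Nat.sub_add_cancel hJn]⟩
  have := Measure.hausdorffMeasure_le_liminf_tsum s _ _ hradius (fun J k => U (k + J))
    (Eventually.of_forall hdiam) (Eventually.of_forall hcover)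
  rwa [htail.liminf_eq, nonpos_iff_eq_zero] at this

theorem dimH_le_ofReal_of_hausdorffMeasure_eq_zero {X : Type*} [EMetricSpace X]
    [MeasurableSpace X] [BorelSpace X] {S : Set X} {D : ℝ}
    (h : ∀ s : ℝ, D < s → μH[s] S = 0) : dimH S ≤ ENNReal.ofReal D :=
  dimH_le fun s hs => not_lt.mp fun hlt => by
    rw [← ENNReal.ofReal_coe_nnreal, ENNReal.ofReal_lt_ofReal_iff'] at hlt
    simp [h s hlt.1] at hs

theorem encard_mul_le_measure_of_pairwiseDisjoint {X ι : Type*} [MeasurableSpace X]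
    (μ : Measure X) {S : Set ι} {A : ι → Set X} {m : ℝ≥0∞} {K : Set X}
    (hA : ∀ i ∈ S, MeasurableSet (A i)) (hdisj : S.PairwiseDisjoint A)
    (hm : ∀ i ∈ S, m ≤ μ (A i)) (hK : ∀ i ∈ S, A i ⊆ K) :
    S.encard * m ≤ μ K :=
  calc S.encard * m = ∑' _ : S, m := (ENNReal.tsum_set_const S m).symm
    _ ≤ ∑' i : S, μ (A i) := ENNReal.tsum_le_tsum fun i => hm i i.2
    _ ≤ μ (⋃ i : S, A i) := tsum_meas_le_meas_iUnion_of_disjoint μ (fun i => hA i i.2)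
        fun i j hij => hdisj i.2 j.2 (Subtype.coe_ne_coe.mpr hij)
    _ ≤ μ K := measure_mono (iUnion_subset fun i => hK i i.2)

theorem summable_mul_two_rpow_neg_mul {N : ℕ → ℝ} (hN : ∀ j, 0 < N j)
    (hlog : Tendsto (fun j : ℕ => Real.logb 2 (N j) / j) atTop (𝓝 0)) {a : ℝ} (ha : 0 < a) :
    Summable fun j : ℕ => N j * (2:ℝ) ^ (-a * j) := by
  have hgeom : Summable fun j : ℕ => ((2:ℝ) ^ (-a / 2)) ^ j :=
    summable_geometric_of_lt_one (by positivity)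
      (Real.rpow_lt_one_of_one_lt_of_neg one_lt_two (by linarith))
  refine hgeom.of_norm_bounded_eventually_nat ?_
  filter_upwards [hlog.eventually (gt_mem_nhds (half_pos ha)), eventually_gt_atTop 0]
    with j hj hj0
  have hNj : N j ≤ 2 ^ (a / 2 * j) :=
    calc N j = 2 ^ Real.logb 2 (N j) := (Real.rpow_logb two_pos (by norm_num) (hN j)).symm
      _ ≤ 2 ^ (a / 2 * j) := Real.rpow_le_rpow_of_exponent_le one_le_two
          ((div_lt_iff₀ (Nat.cast_pos.mpr hj0)).mp hj).le
  rw [Real.norm_of_nonneg (mul_nonneg (hN j).le (by positivity)), ← Real.rpow_natCast,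
    ← Real.rpow_mul zero_le_two]
  calc N j * 2 ^ (-a * j) ≤ 2 ^ (a / 2 * j) * 2 ^ (-a * j) := by gcongr
    _ = 2 ^ (-a / 2 * j) := by rw [← Real.rpow_add two_pos]; ring_nf

open Classical in
theorem exists_le_irred_eq {α : Type*} (x : ℕ → α) (n : ℕ) : ∃ m ≤ n, Irred x m ∧ x m = x n :=
  have h : ∃ m, x m = x n := ⟨n, rfl⟩
  ⟨Nat.find h, Nat.find_min' h rfl,
    fun _ hk hxk => Nat.find_min h hk (hxk.trans (Nat.find_spec h)), Nat.find_spec h⟩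

theorem frequently_irred_and_dist_le {α : Type*} [MetricSpace α] (x : ℕ → α) {f : ℕ → ℝ}
    (hf : Antitone f) (hf0 : Tendsto f atTop (𝓝 0)) {y : α} (hy : y ∉ range x)
    (h : ∃ᶠ n in atTop, dist y (x n) ≤ f n) :
    ∃ᶠ n in atTop, Irred x n ∧ dist y (x n) ≤ f n := by
  rw [Nat.frequently_atTop_iff_infinite] at h ⊢
  intro hfin
  choose first hfirst_le hfirst_irred hfirst_eq using exists_le_irred_eq x
  have hfiber : ∀ m, {n | dist y (x m) ≤ f n}.Finite := fun m => by
    have hpos : 0 < dist y (x m) := dist_pos.mpr fun h => hy ⟨m, h.symm⟩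
    simpa [← Nat.cofinite_eq_atTop] using hf0.eventually (gt_mem_nhds hpos)
  refine h ((hfin.biUnion fun m _ => hfiber m).subset fun n hn => mem_biUnion (x := first n)
    ⟨hfirst_irred n, ?_⟩ ?_)
  · rw [hfirst_eq]
    exact hn.trans (hf (hfirst_le n))
  · simpa only [mem_ofPred_eq, hfirst_eq] using hn

theorem encard_le_of_pairwiseDisjoint_closedBall {d : ℕ} {ι : Type*} {x : ι → Fin d → ℝ}
    (hx : ∀ n i, x n i ∈ Icc (0:ℝ) 1) {r : ι → ℝ} {S : Set ι} (j : ℕ)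
    (hr : ∀ n ∈ S, ((2:ℝ) ^ (j + 1))⁻¹ < r n)
    (hdisj : S.PairwiseDisjoint fun n => closedBall (x n) (r n)) :
    S.encard ≤ 2 ^ ((j + 1) * d) := by
  set ρ : ℝ := ((2:ℝ) ^ (j + 1))⁻¹
  have hρ : 0 ≤ ρ := by positivity
  have hρ_le : ρ ≤ 2⁻¹ := inv_anti₀ two_pos (le_self_pow₀ one_le_two j.succ_ne_zero)
  have hsub : ∀ n ∈ S, closedBall (x n) ρ ⊆ closedBall (fun _ => 2⁻¹) 1 := fun n _ =>
    closedBall_subset_closedBall' <| by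
      have hcenter : dist (x n) (fun _ => 2⁻¹) ≤ 2⁻¹ := (dist_pi_le_iff (by norm_num)).mpr
        fun i => by
          rw [Real.dist_eq, abs_le]
          constructor <;> linarith [(hx n i).1, (hx n i).2]
      linarith
  have key := encard_mul_le_measure_of_pairwiseDisjoint volume
    (fun n _ => measurableSet_closedBall)
    (hdisj.mono_on fun n hn => closedBall_subset_closedBall (hr n hn).le)
    (m := ENNReal.ofReal ((2 * ρ) ^ d))
    (fun n _ => by rw [Real.volume_pi_closedBall _ hρ, Fintype.card_fin]) hsub
  rw [Real.volume_pi_closedBall _ zero_le_one, Fintype.card_fin] at key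
  have hvol : ENNReal.ofReal ((2 * ρ) ^ d) = (2 ^ (j * d))⁻¹ := by
    have h2ρ : 2 * ρ = ((2:ℝ) ^ j)⁻¹ := by
      simp only [ρ, pow_succ, mul_inv]
      ring
    rw [h2ρ, inv_pow, ← pow_mul, ENNReal.ofReal_inv_of_pos (by positivity),
      ENNReal.ofReal_pow zero_le_two, ENNReal.ofReal_ofNat]
  rw [hvol, mul_one, ENNReal.ofReal_pow zero_le_two, ENNReal.ofReal_ofNat, ← div_eq_mul_inv,
    ENNReal.div_le_iff (by simp) (by simp), ← pow_add, add_comm, ← Nat.succ_mul] at key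
  exact_mod_cast key

def irredBall {d : ℕ} (x : ℕ → Fin d → ℝ) (r : ℕ → ℝ) (δ : ℝ) (n : ℕ) : Set (Fin d → ℝ) :=
  {y | n ∈ ⋃ j, Tset x r j ∧ dist y (x n) ≤ r n ^ δ}

section System

variable {d : ℕ} {x : ℕ → Fin d → ℝ} {r : ℕ → ℝ} {N : ℕ → ℕ}

theorem encard_Tset_le (hx : ∀ n i, x n i ∈ Icc (0:ℝ) 1) (hC1 : WeakRedundancy x r N) (j : ℕ) :
    (Tset x r j).encard ≤ N j * 2 ^ ((j + 1) * d) := by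
  obtain ⟨c, hc_lt, hc_disj⟩ := hC1.2.2.2 j
  have hcover : Tset x r j ⊆ ⋃ i ∈ Finset.range (N j), {n ∈ Tset x r j | c n = i} :=
    fun n hn => mem_biUnion (Finset.mem_range.mpr (hc_lt n hn)) ⟨hn, rfl⟩
  have hclass : ∀ i, {n ∈ Tset x r j | c n = i}.encard ≤ 2 ^ ((j + 1) * d) := fun i =>
    encard_le_of_pairwiseDisjoint_closedBall hx j (fun n hn => hn.1.2.1)
      fun m hm n hn hmn => hc_disj m hm.1 n hn.1 hmn (hm.2.trans hn.2.symm)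
  calc (Tset x r j).encard
      ≤ ∑ i ∈ Finset.range (N j), {n ∈ Tset x r j | c n = i}.encard :=
        (encard_le_encard hcover).trans (Finset.set_encard_biUnion_le _ _)
    _ ≤ N j * 2 ^ ((j + 1) * d) := by
        simpa using Finset.sum_le_card_nsmul (Finset.range (N j)) _ _ fun i _ => hclass i

theorem encard_Tset_mul_rpow_le (hx : ∀ n i, x n i ∈ Icc (0:ℝ) 1)
    (hC1 : WeakRedundancy x r N) {δ s : ℝ} (hs : 0 ≤ s) (j : ℕ) :
    ((Tset x r j).encard : ℝ≥0∞) * ENNReal.ofReal (2 * (((2:ℝ) ^ j)⁻¹) ^ δ) ^ s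
      ≤ ENNReal.ofReal (2 ^ d * 2 ^ s * (N j * (2:ℝ) ^ (-(δ * s - d) * j))) := by
  have hcard : ((Tset x r j).encard : ℝ≥0∞) ≤ ENNReal.ofReal (N j * 2 ^ ((j + 1) * d)) := by
    rw [← Nat.cast_ofNat, ← Nat.cast_pow, ← Nat.cast_mul, ENNReal.ofReal_natCast]
    exact_mod_cast encard_Tset_le hx hC1 j
  have hpow : ∀ e : ℕ, (2:ℝ) ^ e = 2 ^ (e : ℝ) := fun e => (Real.rpow_natCast 2 e).symm
  have hexp : (2:ℝ) ^ (((j + 1) * d : ℕ) : ℝ) * 2 ^ (-(j:ℝ) * δ * s)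
      = 2 ^ d * 2 ^ (-(δ * s - d) * j) := by
    rw [hpow d, ← Real.rpow_add two_pos, ← Real.rpow_add two_pos]
    push_cast
    ring_nf
  calc _ ≤ ENNReal.ofReal (N j * 2 ^ ((j + 1) * d))
        * ENNReal.ofReal ((2 * (((2:ℝ) ^ j)⁻¹) ^ δ) ^ s) := by
        rw [ENNReal.ofReal_rpow_of_nonneg (by positivity) hs]
        gcongr
    _ = _ := by
        rw [← ENNReal.ofReal_mul (by positivity), hpow, hpow, ← Real.rpow_neg zero_le_two,
          ← Real.rpow_mul zero_le_two, Real.mul_rpow zero_le_two (by positivity),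
          ← Real.rpow_mul zero_le_two]
        congr 1
        linear_combination (N j * 2 ^ s : ℝ) * hexp

theorem exists_mem_Tset {n : ℕ} (hn : Irred x n) (hr0 : 0 < r n) (hr1 : r n ≤ 1) :
    ∃ j, n ∈ Tset x r j := by
  obtain ⟨j, hj, hj'⟩ := exists_nat_pow_near (one_le_inv₀ hr0 |>.mpr hr1) one_lt_two
  exact ⟨j, hn, inv_lt_of_inv_lt₀ hr0 hj', le_inv_of_le_inv₀ (by positivity) hj⟩

theorem ediam_irredBall_rpow_le {δ s : ℝ} (hδ : 0 ≤ δ) (hs : 0 < s) (n : ℕ) :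
    ediam (irredBall x r δ n) ^ s ≤
      ∑' j, (Tset x r j).indicator (fun _ => ENNReal.ofReal (2 * (((2:ℝ) ^ j)⁻¹) ^ δ) ^ s) n := by
  by_cases hn : n ∈ ⋃ j, Tset x r j
  · obtain ⟨j, hj⟩ := mem_iUnion.mp hn
    refine le_trans ?_ (ENNReal.le_tsum j)
    rw [indicator_of_mem hj]
    gcongr
    refine ediam_le_of_forall_dist_le fun a ha b hb => ?_
    have hr0 : 0 ≤ r n := (inv_pos.mpr (by positivity)).le.trans hj.2.1.le
    calc dist a b ≤ r n ^ δ + r n ^ δ :=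
          (dist_triangle_right a b (x n)).trans (add_le_add ha.2 hb.2)
      _ ≤ 2 * (((2:ℝ) ^ j)⁻¹) ^ δ := by rw [← two_mul]; gcongr; exact hj.2.2
  · have hempty : irredBall x r δ n = ∅ := eq_empty_of_forall_notMem fun y hy => hn hy.1
    simp [hempty, ENNReal.zero_rpow_of_pos hs]

theorem tsum_ediam_irredBall_rpow_lt_top (hx : ∀ n i, x n i ∈ Icc (0:ℝ) 1)
    (hC1 : WeakRedundancy x r N) {δ s : ℝ} (hδ : 0 < δ) (hs : d / δ < s) :
    ∑' n, ediam (irredBall x r δ n) ^ s < ∞ := by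
  have hs0 : 0 < s := (div_nonneg d.cast_nonneg hδ.le).trans_lt hs
  set f : ℕ → ℝ := fun j => 2 ^ d * 2 ^ s * (N j * (2:ℝ) ^ (-(δ * s - d) * j))
  have hf : Summable f := (summable_mul_two_rpow_neg_mul (fun j => Nat.cast_pos.mpr (hC1.2.1 j))
    hC1.2.2.1 (by rwa [sub_pos, ← div_lt_iff₀' hδ])).mul_left _
  have hscale : ∀ j, ((Tset x r j).encard : ℝ≥0∞) * ENNReal.ofReal (2 * (((2:ℝ) ^ j)⁻¹) ^ δ) ^ s
      ≤ ENNReal.ofReal (f j) := encard_Tset_mul_rpow_le hx hC1 hs0.le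
  calc ∑' n, ediam (irredBall x r δ n) ^ s
      ≤ ∑' n, ∑' j, (Tset x r j).indicator
          (fun _ => ENNReal.ofReal (2 * (((2:ℝ) ^ j)⁻¹) ^ δ) ^ s) n :=
        ENNReal.tsum_le_tsum (ediam_irredBall_rpow_le hδ.le hs0)
    _ = ∑' j, ((Tset x r j).encard : ℝ≥0∞) * ENNReal.ofReal (2 * (((2:ℝ) ^ j)⁻¹) ^ δ) ^ s := by
        rw [ENNReal.tsum_comm]
        congr 1 with j
        rw [← tsum_subtype, ENNReal.tsum_set_const]
    _ ≤ ∑' j, ENNReal.ofReal (f j) := ENNReal.tsum_le_tsum hscale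
    _ < ∞ := by
        rw [← ENNReal.ofReal_tsum_of_nonneg (fun j => by positivity) hf]
        exact ENNReal.ofReal_lt_top

theorem setOf_frequently_dist_le_subset (hrpos : ∀ n, 0 < r n) (hrmono : Antitone r)
    (hrlim : Tendsto r atTop (𝓝 0)) {δ : ℝ} (hδ : 0 < δ) :
    {y | ∃ᶠ n in atTop, dist y (x n) ≤ r n ^ δ} ⊆
      {y | ∃ᶠ n in atTop, y ∈ irredBall x r δ n} ∪ range x := by
  intro y hy
  by_cases hyx : y ∈ range x
  · exact Or.inr hyx
  have hanti : Antitone fun n => r n ^ δ := fun m n hmn =>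
    Real.rpow_le_rpow (hrpos n).le (hrmono hmn) hδ.le
  have hlim : Tendsto (fun n => r n ^ δ) atTop (𝓝 0) := by
    simpa [Real.zero_rpow hδ.ne'] using hrlim.rpow_const (Or.inr hδ.le)
  have hsmall : ∀ᶠ n in atTop, r n ≤ 1 := hrlim.eventually (ge_mem_nhds one_pos)
  refine Or.inl (((frequently_irred_and_dist_le x hanti hlim hyx hy).and_eventually hsmall).mono
    fun n ⟨⟨hirr, hdist⟩, hr1⟩ => ⟨mem_iUnion.mpr (exists_mem_Tset hirr (hrpos n) hr1), hdist⟩)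

end System

theorem stmt2_general (d : ℕ)
    (x : ℕ → Fin d → ℝ) (hx : ∀ n i, x n i ∈ Icc (0:ℝ) 1)
    (r : ℕ → ℝ) (hrpos : ∀ n, 0 < r n) (hrmono : Antitone r)
    (hrlim : Tendsto r atTop (nhds 0))
    (N : ℕ → ℕ) (hC1 : WeakRedundancy x r N)
    (δ : ℝ) (hδ : 1 ≤ δ) :
    dimH {y : Fin d → ℝ | ∃ᶠ n in atTop, dist y (x n) ≤ r n ^ δ}
      ≤ ENNReal.ofReal ((d : ℝ) / δ) := by
  have hδ0 : 0 < δ := zero_lt_one.trans_le hδ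
  refine (dimH_mono (setOf_frequently_dist_le_subset hrpos hrmono hrlim hδ0)).trans ?_
  rw [dimH_union, dimH_countable (countable_range x), max_eq_left zero_le]
  refine dimH_le_ofReal_of_hausdorffMeasure_eq_zero fun s hs => ?_
  have hs0 : 0 < s := (div_nonneg d.cast_nonneg hδ0.le).trans_lt hs
  exact hausdorffMeasure_setOf_frequently_mem_eq_zero hs0 _
    (tsum_ediam_irredBall_rpow_lt_top hx hC1 hδ0 hs).ne

/-- If a system `((x n, r n))` in `[0,1]^d` satisfies the weak redundancy condition `C₁`,
then for every `δ ≥ 1` the Hausdorff dimension of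
`L_δ = {y : dist y (x n) ≤ r n ^ δ for infinitely many n}` is at most `d / δ`. -/
theorem stmt2 (d : ℕ) (hd : 1 ≤ d)
    (x : ℕ → Fin d → ℝ) (hx : ∀ n i, x n i ∈ Icc (0:ℝ) 1)
    (r : ℕ → ℝ) (hrpos : ∀ n, 0 < r n) (hrmono : Antitone r)
    (hrlim : Tendsto r atTop (nhds 0))
    (N : ℕ → ℕ) (hC1 : WeakRedundancy x r N)
    (δ : ℝ) (hδ : 1 ≤ δ) :
    dimH {y : Fin d → ℝ | ∃ᶠ n in atTop, dist y (x n) ≤ r n ^ δ}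
      ≤ ENNReal.ofReal ((d : ℝ) / δ) :=
  stmt2_general d x hx r hrpos hrmono hrlim N hC1 δ hδ
end
end

section
/- Let j, j' be positive integers with j ≤ j' ≤ δ(j+1) + 4 for some δ > 1, let k ∈ {0,...,2^j-1}^d have at least one odd coordinate, and let k' ∈ {0,...,2^{j'}-1}^d have at least one odd coordinate with k'·2^{-j'} ≠ k·2^{-j}. Then |k·2^{-j} - k'·2^{-j'}| ≥ (2^{-j}/32)^δ in the L^∞ norm. -/
open Metric Set Filter

noncomputable section

/-- Both points lie on the grid `2^{-n} ℤ`, so their difference is a nonzero integer multiple of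
`2^{-n}`. -/
theorem inv_two_pow_le_abs_sub_of_ne {m n : ℕ} (hmn : m ≤ n) {a b : ℤ}
    (hne : (a : ℝ) * ((2:ℝ) ^ m)⁻¹ ≠ b * ((2:ℝ) ^ n)⁻¹) :
    ((2:ℝ) ^ n)⁻¹ ≤ |(a : ℝ) * ((2:ℝ) ^ m)⁻¹ - b * ((2:ℝ) ^ n)⁻¹| := by
  set c : ℤ := a * 2 ^ (n - m) - b
  have hsub : (a : ℝ) * ((2:ℝ) ^ m)⁻¹ - b * ((2:ℝ) ^ n)⁻¹ = c * ((2:ℝ) ^ n)⁻¹ := by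
    rw [← Nat.add_sub_cancel' hmn, pow_add]
    push_cast [c]
    field_simp
  have hc : c ≠ 0 := by
    rintro hc
    rw [hc, Int.cast_zero, zero_mul, sub_eq_zero] at hsub
    exact hne hsub
  rw [hsub, abs_mul, abs_inv, abs_of_pos (a := (2:ℝ) ^ n) (by positivity)]
  exact le_mul_of_one_le_left (by positivity) (by exact_mod_cast Int.one_le_abs hc)

theorem inv_two_pow_le_dist_of_ne {ι : Type*} [Fintype ι] {m n : ℕ} (hmn : m ≤ n)
    {a b : ι → ℤ}
    (hne : (fun i => (a i : ℝ) * ((2:ℝ) ^ m)⁻¹) ≠ fun i => (b i : ℝ) * ((2:ℝ) ^ n)⁻¹) :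
    ((2:ℝ) ^ n)⁻¹ ≤
      dist (fun i => (a i : ℝ) * ((2:ℝ) ^ m)⁻¹) (fun i => (b i : ℝ) * ((2:ℝ) ^ n)⁻¹) := by
  obtain ⟨i, hi⟩ := Function.ne_iff.mp hne
  have hcoord := inv_two_pow_le_abs_sub_of_ne hmn hi
  rw [← Real.dist_eq] at hcoord
  exact hcoord.trans
    (dist_le_pi_dist (fun i => (a i : ℝ) * ((2:ℝ) ^ m)⁻¹) (fun i => (b i : ℝ) * ((2:ℝ) ^ n)⁻¹) i)

/-- Both sides are powers of two: the left one is `2^{-δ(m+5)}`. -/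
theorem inv_two_pow_div_32_rpow_le {m n : ℕ} {δ : ℝ} (h : (n : ℝ) ≤ δ * (m + 5)) :
    (((2:ℝ) ^ m)⁻¹ / 32) ^ δ ≤ ((2:ℝ) ^ n)⁻¹ := by
  have hbase : ((2:ℝ) ^ m)⁻¹ / 32 = (2:ℝ) ^ (-((m : ℝ) + 5)) := by
    rw [Real.rpow_neg zero_le_two, Real.rpow_add two_pos, Real.rpow_natCast]
    norm_num
    ring
  rw [hbase, ← Real.rpow_natCast, ← Real.rpow_neg zero_le_two, ← Real.rpow_mul zero_le_two]
  exact Real.rpow_le_rpow_of_exponent_le one_le_two (by linarith)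

theorem stmt6_general (d : ℕ) (δ : ℝ) (hδ : 1 < δ)
    (j j' : ℕ) (hjj' : j ≤ j') (hj' : (j' : ℝ) ≤ δ * (j + 1) + 4)
    (k : Fin d → ℕ) (k' : Fin d → ℕ)
    (hne : (fun i => (k i : ℝ) * ((2:ℝ) ^ j)⁻¹) ≠
           (fun i => (k' i : ℝ) * ((2:ℝ) ^ j')⁻¹)) :
    (((2:ℝ) ^ j)⁻¹ / 32) ^ δ ≤
      dist (fun i => (k i : ℝ) * ((2:ℝ) ^ j)⁻¹)
           (fun i => (k' i : ℝ) * ((2:ℝ) ^ j')⁻¹) := by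
  have hsep := inv_two_pow_le_dist_of_ne (a := fun i => (k i : ℤ)) (b := fun i => (k' i : ℤ))
    hjj' (by exact_mod_cast hne)
  push_cast at hsep
  exact (inv_two_pow_div_32_rpow_le (by linarith)).trans hsep

/-- Separation of irreducible dyadic points of generations `j ≤ j' ≤ δ(j+1)+4` from a
contracted ball: if `k·2^{-j} ≠ k'·2^{-j'}` are irreducible dyadic points (each has an
odd coordinate), then `|k·2^{-j} - k'·2^{-j'}| ≥ (2^{-j}/32)^δ` in the sup norm. -/
theorem stmt6 (d : ℕ) (hd : 1 ≤ d) (δ : ℝ) (hδ : 1 < δ)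
    (j j' : ℕ) (hj : 1 ≤ j) (hjj' : j ≤ j') (hj' : (j' : ℝ) ≤ δ * (j + 1) + 4)
    (k : Fin d → ℕ) (hk : ∀ i, k i < 2 ^ j) (hodd : ∃ i, Odd (k i))
    (k' : Fin d → ℕ) (hk' : ∀ i, k' i < 2 ^ j') (hodd' : ∃ i, Odd (k' i))
    (hne : (fun i => (k i : ℝ) * ((2:ℝ) ^ j)⁻¹) ≠
           (fun i => (k' i : ℝ) * ((2:ℝ) ^ j')⁻¹)) :
    (((2:ℝ) ^ j)⁻¹ / 32) ^ δ ≤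
      dist (fun i => (k i : ℝ) * ((2:ℝ) ^ j)⁻¹)
           (fun i => (k' i : ℝ) * ((2:ℝ) ^ j')⁻¹) :=
  stmt6_general d δ hδ j j' hjj' hj' k k' hne
end
end

section
/- For each j ≥ 1, any ball B(p/q, 1/q^2) with p,q integers, 0 ≤ p ≤ q-1, and q^2 ∈ (2^j, 2^{j+1}], contains at most 4 distinct irreducible rational numbers p'/q' (with gcd(p',q') = 1) satisfying (q')^2 ∈ (2^j, 2^{j+1}]. Consequently, the rational system R = ((p/q, 1/q^2))_{q≥1, 0≤p≤q-1} satisfies the weak redundancy condition C_1 with constant sequence N_j = 4. -/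
open Metric Set Filter

/-! Distinct rationals whose denominators satisfy `q² ≤ 2^(j+1)` are `2^-(j+1)`-separated, since
`|p/q - p'/q'| ≥ 1/(q q') ≥ 2^-(j+1)`. A ball `B(p/q, 1/q²)` with `q² > 2^j` has diameter
`< 4 · 2^-(j+1)`, so it holds at most four of them. For the colouring, colour each such point of
`[0,1]` by its rank modulo 4: two points of the same colour enclose at least five points, so they
are at distance `≥ 4 · 2^-(j+1)`, which exceeds the sum of the two radii. -/

namespace Rat

lemma inv_den_le_abs {r : ℚ} (hr : r ≠ 0) : (r.den : ℚ)⁻¹ ≤ |r| := by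
  rw [inv_le_iff_one_le_mul₀ (by positivity), ← Nat.abs_cast, ← abs_mul, mul_den_eq_num]
  exact_mod_cast Int.one_le_abs (num_ne_zero.2 hr)

lemma inv_den_mul_den_le_abs_sub {z z' : ℚ} (h : z ≠ z') :
    ((z.den : ℚ) * z'.den)⁻¹ ≤ |z - z'| := by
  refine le_trans ?_ (inv_den_le_abs (sub_ne_zero.2 h))
  apply inv_anti₀ (by positivity)
  exact_mod_cast Nat.le_of_dvd (by positivity) (sub_den_dvd z z')

lemma inv_le_abs_sub_of_den_sq_le {N : ℕ} {z z' : ℚ} (hz : z.den ^ 2 ≤ N)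
    (hz' : z'.den ^ 2 ≤ N) (h : z ≠ z') : (N : ℚ)⁻¹ ≤ |z - z'| := by
  have hN : z.den * z'.den ≤ N := by
    apply (Nat.pow_le_pow_iff_left two_ne_zero).1
    calc (z.den * z'.den) ^ 2 = z.den ^ 2 * z'.den ^ 2 := mul_pow _ _ _
      _ ≤ N ^ 2 := by rw [sq N]; exact Nat.mul_le_mul hz hz'
  refine le_trans ?_ (inv_den_mul_den_le_abs_sub h)
  apply inv_anti₀ (by positivity)
  exact_mod_cast hN

end Rat

lemma pairwise_inv_le_abs_sub_image_cast (N : ℕ) :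
    (((↑) : ℚ → ℝ) '' {z | z.den ^ 2 ≤ N}).Pairwise fun x y => (N : ℝ)⁻¹ ≤ |x - y| := by
  rintro _ ⟨z, hz, rfl⟩ _ ⟨z', hz', rfl⟩ hne
  have h := (Rat.cast_le (K := ℝ)).2
    (Rat.inv_le_abs_sub_of_den_sq_le hz hz' (ne_of_apply_ne _ hne))
  push_cast at h
  exact h

section Separated

variable {K : Type*} [Field K] [LinearOrder K] [IsStrictOrderedRing K] [FloorRing K]
  {S t : Set K} {a w : K}

lemma injOn_floor_sub_div_of_pairwise (hw : 0 < w) (ht : t.Pairwise fun x y => w ≤ |x - y|) :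
    InjOn (fun x => ⌊(x - a) / w⌋) t := by
  intro x hx y hy hxy
  by_contra hne
  have := Int.abs_sub_lt_one_of_floor_eq_floor hxy
  rw [← sub_div, sub_sub_sub_cancel_right, abs_div, abs_of_pos hw, div_lt_one hw] at this
  exact (ht hx hy hne).not_gt this

lemma Set.Finite.of_pairwise_le_abs_sub {b : K} (hw : 0 < w) (hsub : t ⊆ Icc a b)
    (ht : t.Pairwise fun x y => w ≤ |x - y|) : t.Finite := by
  refine Finite.of_injOn (t := Icc 0 ⌊(b - a) / w⌋) ?_
    (injOn_floor_sub_div_of_pairwise (a := a) hw ht) (finite_Icc _ _)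
  intro x hx
  obtain ⟨hax, hxb⟩ := hsub hx
  exact ⟨Int.floor_nonneg.2 (div_nonneg (sub_nonneg.2 hax) hw.le),
    Int.floor_le_floor (by gcongr)⟩

lemma ncard_le_of_pairwise_le_abs_sub {n : ℕ} (hw : 0 < w) (hsub : t ⊆ Ico a (a + n * w))
    (ht : t.Pairwise fun x y => w ≤ |x - y|) : t.ncard ≤ n := by
  calc t.ncard ≤ (Ico (0 : ℤ) n).ncard := by
        refine ncard_le_ncard_of_injOn _ ?_ (injOn_floor_sub_div_of_pairwise (a := a) hw ht)
          (finite_Ico _ _)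
        intro x hx
        obtain ⟨hax, hxa⟩ := hsub hx
        refine ⟨Int.floor_nonneg.2 (div_nonneg (sub_nonneg.2 hax) hw.le), ?_⟩
        rw [Int.floor_lt, div_lt_iff₀ hw]
        push_cast
        linarith
    _ = n := by rw [← Finset.coe_Ico, ncard_coe_finset, Int.card_Ico]; simp

lemma exists_fin_coloring_le_abs_sub (hS : S.Finite) (hw : 0 < w)
    (hsep : S.Pairwise fun x y => w ≤ |x - y|) {n : ℕ} (hn : 0 < n) :
    ∃ c : K → Fin n, ∀ x ∈ S, ∀ y ∈ S, x ≠ y → c x = c y → n * w ≤ |x - y| := by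
  let rank : K → ℕ := fun x => (S ∩ Iio x).ncard
  have key : ∀ x ∈ S, ∀ y ∈ S, x < y → rank x % n = rank y % n → n * w ≤ y - x := by
    intro x hx y hy hxy hc
    by_contra! hlt
    set M := S ∩ Ico x y
    have hrank : rank y = rank x + M.ncard := by
      have hdisj : Disjoint (S ∩ Iio x) M := (Iio_disjoint_Ici le_rfl).mono inter_subset_right
        (inter_subset_right.trans Ico_subset_Ici_self)
      rw [← ncard_union_eq hdisj (hS.subset inter_subset_left) (hS.subset inter_subset_left),
        ← inter_union_distrib_left, Iio_union_Ico_eq_Iio hxy.le]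
    have hM : n ≤ M.ncard := by
      have hdvd : n ∣ M.ncard := by
        rw [← Nat.modEq_zero_iff_dvd]
        exact Nat.ModEq.add_left_cancel' (rank x) (by rw [add_zero, ← hrank]; exact hc.symm)
      have hxM : x ∈ M := ⟨hx, le_rfl, hxy⟩
      exact Nat.le_of_dvd ((ncard_pos (hS.subset inter_subset_left)).2 ⟨x, hxM⟩) hdvd
    have hyM : y ∉ M := fun h => lt_irrefl y h.2.2
    have hcount : (insert y M).ncard ≤ n := by
      refine ncard_le_of_pairwise_le_abs_sub (a := x) hw ?_
        (hsep.mono (insert_subset hy inter_subset_left))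
      rintro z (rfl | ⟨-, hxz, hzy⟩)
      · exact ⟨hxy.le, by linarith⟩
      · exact ⟨hxz, by linarith⟩
    rw [ncard_insert_of_notMem hyM (hS.subset inter_subset_left)] at hcount
    omega
  refine ⟨fun x => ⟨rank x % n, Nat.mod_lt _ hn⟩, fun x hx y hy hne hc => ?_⟩
  have hc' : rank x % n = rank y % n := Fin.mk.inj_iff.1 hc
  rcases hne.lt_or_gt with hxy | hyx
  · rw [abs_sub_comm, abs_of_pos (sub_pos.2 hxy)]
    exact key x hx y hy hxy hc'
  · rw [abs_of_pos (sub_pos.2 hyx)]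
    exact key y hy x hx hyx hc'.symm

end Separated

lemma inv_sq_lt_two_mul_inv_two_pow_succ {j d : ℕ} (h : 2 ^ j < d ^ 2) :
    ((d : ℝ) ^ 2)⁻¹ < 2 * ((2 : ℝ) ^ (j + 1))⁻¹ := by
  rw [pow_succ' (2 : ℝ) j, mul_inv, mul_inv_cancel_left₀ two_ne_zero]
  exact inv_strictAnti₀ (by positivity) (by exact_mod_cast h)

theorem stmt7_general (j : ℕ) :
    (∀ p q : ℕ, 1 ≤ q → p ≤ q - 1 → 2 ^ j < q ^ 2 → q ^ 2 ≤ 2 ^ (j + 1) →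
      ({z : ℚ | 2 ^ j < z.den ^ 2 ∧ z.den ^ 2 ≤ 2 ^ (j + 1) ∧
          |(z : ℝ) - (p : ℝ) / q| ≤ ((q : ℝ) ^ 2)⁻¹}).ncard ≤ 4) ∧
    ∃ c : ℚ → Fin 4,
      ∀ z z' : ℚ, z ∈ Icc (0:ℚ) 1 → z' ∈ Icc (0:ℚ) 1 →
        2 ^ j < z.den ^ 2 → z.den ^ 2 ≤ 2 ^ (j + 1) →
        2 ^ j < z'.den ^ 2 → z'.den ^ 2 ≤ 2 ^ (j + 1) →
        z ≠ z' → c z = c z' →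
        Disjoint (closedBall (z : ℝ) (((z.den : ℝ) ^ 2)⁻¹))
          (closedBall (z' : ℝ) (((z'.den : ℝ) ^ 2)⁻¹)) := by
  have hw : (0 : ℝ) < ((2 : ℝ) ^ (j + 1))⁻¹ := by positivity
  have hsep := pairwise_inv_le_abs_sub_image_cast (2 ^ (j + 1))
  push_cast at hsep
  constructor
  · intro p q _ _ hq _
    have hr := inv_sq_lt_two_mul_inv_two_pow_succ hq
    rw [← ncard_image_of_injective _ (Rat.cast_injective (α := ℝ))]
    refine ncard_le_of_pairwise_le_abs_sub (a := p / q - ((q : ℝ) ^ 2)⁻¹) hw ?_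
      (hsep.mono (image_mono fun z hz => hz.2.1))
    rintro _ ⟨z, ⟨-, -, hz⟩, rfl⟩
    obtain ⟨hlo, hhi⟩ := abs_le.1 hz
    constructor <;> push_cast <;> linarith
  · set S : Set ℝ := ((↑) : ℚ → ℝ) '' {z | z ∈ Icc 0 1 ∧ z.den ^ 2 ≤ 2 ^ (j + 1)}
    have hSsep : S.Pairwise fun x y => ((2 : ℝ) ^ (j + 1))⁻¹ ≤ |x - y| :=
      hsep.mono (image_mono fun z hz => hz.2)
    have hS : S.Finite := by
      refine Set.Finite.of_pairwise_le_abs_sub (a := 0) (b := 1) hw ?_ hSsep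
      rintro _ ⟨z, ⟨⟨h0, h1⟩, -⟩, rfl⟩
      exact ⟨by exact_mod_cast h0, by exact_mod_cast h1⟩
    obtain ⟨c, hc⟩ := exists_fin_coloring_le_abs_sub hS hw hSsep four_pos
    refine ⟨c ∘ (↑), fun z z' hz hz' hjz hz2 hjz' hz'2 hne hcc => ?_⟩
    apply closedBall_disjoint_closedBall
    have hfar := hc z ⟨z, ⟨hz, hz2⟩, rfl⟩ z' ⟨z', ⟨hz', hz'2⟩, rfl⟩
      (Rat.cast_injective.ne hne) hcc
    rw [Real.dist_eq]
    norm_num at hfar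
    linarith [inv_sq_lt_two_mul_inv_two_pow_succ hjz, inv_sq_lt_two_mul_inv_two_pow_succ hjz']

/-- For each `j ≥ 1`: (a) any ball `B(p/q, 1/q²)` with `0 ≤ p ≤ q-1` and
`q² ∈ (2^j, 2^{j+1}]` contains at most `4` distinct irreducible rationals `p'/q'` with
`(q')² ∈ (2^j, 2^{j+1}]`; (b) consequently the rational system satisfies the weak
redundancy condition `C₁` with constant sequence `N_j = 4`: the irreducible rationals of
[0,1] with denominator-squared in `(2^j, 2^{j+1}]` admit a `4`-colouring for which
same-colour distinct points carry disjoint balls `B(p'/q', 1/(q')²)`. -/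
theorem stmt7 (j : ℕ) (hj : 1 ≤ j) :
    (∀ p q : ℕ, 1 ≤ q → p ≤ q - 1 → 2 ^ j < q ^ 2 → q ^ 2 ≤ 2 ^ (j + 1) →
      ({z : ℚ | 2 ^ j < z.den ^ 2 ∧ z.den ^ 2 ≤ 2 ^ (j + 1) ∧
          |(z : ℝ) - (p : ℝ) / q| ≤ ((q : ℝ) ^ 2)⁻¹}).ncard ≤ 4) ∧
    ∃ c : ℚ → Fin 4,
      ∀ z z' : ℚ, z ∈ Icc (0:ℚ) 1 → z' ∈ Icc (0:ℚ) 1 →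
        2 ^ j < z.den ^ 2 → z.den ^ 2 ≤ 2 ^ (j + 1) →
        2 ^ j < z'.den ^ 2 → z'.den ^ 2 ≤ 2 ^ (j + 1) →
        z ≠ z' → c z = c z' →
        Disjoint (closedBall (z : ℝ) (((z.den : ℝ) ^ 2)⁻¹))
          (closedBall (z' : ℝ) (((z'.den : ℝ) ^ 2)⁻¹)) :=
  stmt7_general j
end

section
/- Let (F_n)_{n≥0} be a nested sequence of finite families of closed dyadic cubes in [0,1]^d (each cube of F_{n+1} contained in exactly one cube of F_n), and suppose for each U ∈ F_{n-1} there is j(U) ≥ 2g(U) with: the cubes of F_n inside U number exactly (κ/2^{d+1})·2^{d(j(U)-g(U))}, are pairwise at distance at least 2^{-j(U)}, and have generation at most δ·(j(U)+1)+4, where κ ∈ (0,1) and δ > 1 are fixed. Let μ be the probability measure splitting mass equally among children at each step. If for each n the minimum j over U ∈ F_{n-1} is chosen sufficiently large, then for every U ∈ F_{n-1} and child V ∈ F_n, μ(V) ≤ |V|^{d/δ - 3dφ(|V|)}, where φ ∈ Φ is fixed. -/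
open Metric Set Filter

noncomputable section

/-- The class `Φ` of admissible modulating functions. -/
structure MemPhi (φ : ℝ → ℝ) : Prop where
  cont : Continuous φ
  mono : MonotoneOn φ (Ici 0)
  nonneg : ∀ x ∈ Ici (0:ℝ), 0 ≤ φ x
  zero : φ 0 = 0
  anti : StrictAntiOn (fun x : ℝ => x ^ (-(φ x))) (Ioi 0)
  tendsto_top : Tendsto (fun x : ℝ => x ^ (-(φ x))) (nhdsWithin 0 (Ioi 0)) atTop
  incr : ∀ α β : ℝ, 0 < α → 0 < β →
    ∃ ε > 0, StrictMonoOn (fun x : ℝ => x ^ (α - β * φ x)) (Ioo 0 ε)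

/-!
Write every quantity as a power of `2`. The parent contributes `2^{-g(d/δ - 3dφ(2^{-g}))}`,
the number of children `2^{log₂κ - (d+1) + d(j-g)}`, and since `g(V) ≤ δ(j+1)+4` the
target exponent `-g(V)·d/δ` is at least `-d(j+5)`. The `-dj` terms cancel, so what remains
is a bound `3d·g(V)φ(2^{-g(V)}) ≥ C(g, d, κ)`. Because `x^{-φ(x)}` is decreasing and tends to `∞` as
`x → 0⁺`, its base-2 logarithm `n φ(2^{-n})` at `x = 2^{-n}` is monotone and tends to `∞`,
so `g(V) ≥ j ≥ J₀` gives that bound.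
-/

lemma inv_two_pow_rpow (n : ℕ) (e : ℝ) :
    (((2:ℝ) ^ n)⁻¹) ^ e = (2:ℝ) ^ (-((n:ℝ) * e)) := by
  rw [← Real.rpow_natCast, ← Real.rpow_neg zero_le_two, ← Real.rpow_mul zero_le_two]
  ring_nf

lemma log_inv_two_pow_rpow_neg (n : ℕ) (c : ℝ) :
    Real.log ((((2:ℝ) ^ n)⁻¹) ^ (-c)) = (n:ℝ) * c * Real.log 2 := by
  rw [Real.log_rpow (by positivity), Real.log_inv, Real.log_pow]
  ring

namespace MemPhi

variable {φ : ℝ → ℝ}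

lemma monotone_natCast_mul_inv_two_pow (hφ : MemPhi φ) :
    Monotone fun n : ℕ => (n:ℝ) * φ (((2:ℝ) ^ n)⁻¹) := by
  refine monotone_nat_of_le_succ fun n => ?_
  have hlt : ((2:ℝ) ^ (n + 1))⁻¹ < ((2:ℝ) ^ n)⁻¹ :=
    inv_strictAnti₀ (by positivity) (pow_lt_pow_right₀ one_lt_two n.lt_succ_self)
  have hpow := hφ.anti (mem_Ioi.mpr (by positivity)) (mem_Ioi.mpr (by positivity)) hlt
  have hlog := Real.log_lt_log (by positivity) hpow
  rw [log_inv_two_pow_rpow_neg, log_inv_two_pow_rpow_neg] at hlog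
  exact (mul_lt_mul_iff_of_pos_right (Real.log_pos one_lt_two)).mp hlog |>.le

lemma tendsto_natCast_mul_inv_two_pow (hφ : MemPhi φ) :
    Tendsto (fun n : ℕ => (n:ℝ) * φ (((2:ℝ) ^ n)⁻¹)) atTop atTop := by
  have hdyadic : Tendsto (fun n : ℕ => ((2:ℝ) ^ n)⁻¹) atTop (nhdsWithin 0 (Ioi 0)) :=
    tendsto_nhdsWithin_of_tendsto_nhds_of_eventually_within _
      (tendsto_inv_atTop_zero.comp (tendsto_pow_atTop_atTop_of_one_lt one_lt_two))
      (Eventually.of_forall fun n => mem_Ioi.mpr (by positivity))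
  have hlog := Real.tendsto_log_atTop.comp (hφ.tendsto_top.comp hdyadic)
  refine (hlog.atTop_div_const (Real.log_pos one_lt_two)).congr fun n => ?_
  simp only [Function.comp_apply, log_inv_two_pow_rpow_neg]
  field_simp

end MemPhi

lemma div_two_pow_mul_two_pow_eq_rpow {κ : ℝ} (hκ : 0 < κ) {d j g : ℕ} (hgj : g ≤ j) :
    κ / 2 ^ (d + 1) * 2 ^ (d * (j - g))
      = (2:ℝ) ^ (Real.logb 2 κ - ((d:ℝ) + 1) + d * ((j:ℝ) - g)) := by
  rw [Real.rpow_add two_pos, Real.rpow_sub two_pos, Real.rpow_logb two_pos (by norm_num) hκ,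
    ← Nat.cast_sub hgj, ← Nat.cast_succ, ← Nat.cast_mul, Real.rpow_natCast, Real.rpow_natCast]

lemma child_exponent_le {D δ l g j gV φg φV : ℝ} (hD : 0 ≤ D) (hδ : 1 ≤ δ) (hg : 0 ≤ g)
    (hgV : gV ≤ δ * (j + 1) + 4)
    (hφV : 3 * D * g * φg + D * g - l + 6 * D + 1 ≤ 3 * D * (gV * φV)) :
    -(g * (D / δ - 3 * D * φg)) - (l - (D + 1) + D * (j - g))
      ≤ -(gV * (D / δ - 3 * D * φV)) := by
  have hδ0 : 0 < δ := one_pos.trans_le hδ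
  have hgV' : gV / δ ≤ j + 5 := by
    rw [div_le_iff₀ hδ0]
    nlinarith
  have hchild : gV * (D / δ) ≤ D * (j + 5) := by
    calc gV * (D / δ) = D * (gV / δ) := by ring
      _ ≤ D * (j + 5) := mul_le_mul_of_nonneg_left hgV' hD
  have hparent : 0 ≤ g * (D / δ) := by positivity
  linarith

theorem stmt19_general (d : ℕ) (hd : 1 ≤ d) (δ κ : ℝ) (hδ : 1 < δ)
    (hκ0 : 0 < κ) (φ : ℝ → ℝ) (hφ : MemPhi φ)
    (g : ℕ) (mU : ℝ)
    (hmU : mU ≤ (((2:ℝ) ^ g)⁻¹) ^ ((d : ℝ) / δ - 3 * d * φ (((2:ℝ) ^ g)⁻¹))) :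
    ∃ J₀ : ℕ, ∀ j : ℕ, J₀ ≤ j → 2 * g ≤ j →
      ∀ gV : ℕ, j ≤ gV → (gV : ℝ) ≤ δ * ((j : ℝ) + 1) + 4 →
        mU / (κ / 2 ^ (d + 1) * 2 ^ (d * (j - g)))
          ≤ (((2:ℝ) ^ gV)⁻¹) ^ ((d : ℝ) / δ - 3 * d * φ (((2:ℝ) ^ gV)⁻¹)) := by
  have hD : (0:ℝ) < d := by exact_mod_cast hd
  have hgrowth :=
    hφ.tendsto_natCast_mul_inv_two_pow.const_mul_atTop (by positivity : (0:ℝ) < 3 * d)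
  obtain ⟨J₀, hJ₀⟩ := eventually_atTop.mp <| hgrowth.eventually_ge_atTop
    (3 * d * g * φ (((2:ℝ) ^ g)⁻¹) + d * g - Real.logb 2 κ + 6 * d + 1)
  refine ⟨J₀, fun j hj hgj gV hjgV hgV => ?_⟩
  have hφV := (hJ₀ j hj).trans <| mul_le_mul_of_nonneg_left
    (hφ.monotone_natCast_mul_inv_two_pow hjgV) (by positivity)
  rw [inv_two_pow_rpow] at hmU ⊢
  rw [div_two_pow_mul_two_pow_eq_rpow hκ0 (by omega), div_le_iff₀ (by positivity),
    ← Real.rpow_add two_pos]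
  calc mU ≤ (2:ℝ) ^ (-((g:ℝ) * ((d:ℝ) / δ - 3 * d * φ (((2:ℝ) ^ g)⁻¹)))) := hmU
    _ ≤ _ := Real.rpow_le_rpow_of_exponent_le one_le_two <| by
      linarith [child_exponent_le hD.le hδ.le g.cast_nonneg hgV hφV]

/-- The measure-scaling estimate in the inductive Cantor-set construction (Part 4 of the
induction): a cube `U` of generation `g` with mass `μ(U) ≤ |U|^{d/δ - 3dφ(|U|)}` splits
its mass equally among `(κ/2^{d+1})·2^{d(j-g)}` children of generations
`gV ∈ [j, δ(j+1)+4]`; if `j ≥ 2g` is chosen sufficiently large, each child `V` receives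
mass `μ(V) = μ(U)/#children ≤ |V|^{d/δ - 3dφ(|V|)}`. -/
theorem stmt19 (d : ℕ) (hd : 1 ≤ d) (δ κ : ℝ) (hδ : 1 < δ)
    (hκ0 : 0 < κ) (hκ1 : κ < 1) (φ : ℝ → ℝ) (hφ : MemPhi φ)
    (g : ℕ) (mU : ℝ) (hmU0 : 0 ≤ mU)
    (hmU : mU ≤ (((2:ℝ) ^ g)⁻¹) ^ ((d : ℝ) / δ - 3 * d * φ (((2:ℝ) ^ g)⁻¹))) :
    ∃ J₀ : ℕ, ∀ j : ℕ, J₀ ≤ j → 2 * g ≤ j →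
      ∀ gV : ℕ, j ≤ gV → (gV : ℝ) ≤ δ * ((j : ℝ) + 1) + 4 →
        mU / (κ / 2 ^ (d + 1) * 2 ^ (d * (j - g)))
          ≤ (((2:ℝ) ^ gV)⁻¹) ^ ((d : ℝ) / δ - 3 * d * φ (((2:ℝ) ^ gV)⁻¹)) :=
  stmt19_general d hd δ κ hδ hκ0 φ hφ g mU hmU
end
end
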